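/- arXiv:2511.06913 — 2 statements merged into one kernel-verified Lean document; each statement's English description precedes it below -/
import Mathlib

section
/- Aitken's theorem (GLS is BLUE), matrix form: let n, d be positive integers, let X be a real n×d matrix of full column rank d, and let Σ be a symmetric positive definite n×n real matrix. Then for every real d×n matrix A with A X = I_d (the coefficient matrix of a linear unbiased estimator), the matrix A Σ Aᵀ − (Xᵀ Σ⁻¹ X)⁻¹ is positive semidefinite; that is, the covariance A Σ Aᵀ of any linear unbiased estimator dominates, in the Loewner order, the covariance (Xᵀ Σ⁻¹ X)⁻¹ of the generalized least squares estimator θ̂_GLS = (Xᵀ Σ⁻¹ X)⁻¹ Xᵀ Σ⁻¹ y. -/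
/-! Let `G = (Xᵀ S⁻¹ X)⁻¹ Xᵀ S⁻¹` be the GLS coefficient matrix. For every `A` with `A X = 1`,
`A S Gᵀ = A X (Xᵀ S⁻¹ X)⁻¹ = (Xᵀ S⁻¹ X)⁻¹`; applied to `A` and to `G` itself (also unbiased),
this makes the cross terms cancel in
`(A - G) S (A - G)ᵀ = A S Aᵀ - (Xᵀ S⁻¹ X)⁻¹`,
and the left side is positive semidefinite. Full column rank of `X` makes `Xᵀ S⁻¹ X` positive
definite, hence invertible. -/

open Matrix

namespace Matrix

variable {m n K : Type*}

theorem mulVec_injective_iff_rank_eq_card [Fintype n] [Field K] {X : Matrix m n K} :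
    Function.Injective X.mulVec ↔ X.rank = Fintype.card n := by
  rw [mulVec_injective_iff, linearIndependent_iff_card_eq_finrank_span, rank_eq_finrank_span_cols,
    Set.finrank, eq_comm]

theorem IsSymm.transpose_mul_mul [Fintype m] [CommSemiring K] {S : Matrix m m K} (hS : S.IsSymm)
    (X : Matrix m n K) : (Xᵀ * S * X).IsSymm := by
  simp [IsSymm, Matrix.mul_assoc, hS.eq]

variable [Fintype m] [Fintype n] [DecidableEq m] [DecidableEq n] [CommRing K]

/-- `glsCoeff X S *ᵥ y` is the generalized least squares estimate of `θ` in `y = X θ + ε`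
with `Var ε = S`. -/
noncomputable def glsCoeff (X : Matrix m n K) (S : Matrix m m K) : Matrix n m K :=
  (Xᵀ * S⁻¹ * X)⁻¹ * Xᵀ * S⁻¹

variable {X : Matrix m n K} {S : Matrix m m K}

theorem glsCoeff_mul (hC : IsUnit (Xᵀ * S⁻¹ * X).det) : glsCoeff X S * X = 1 := by
  rw [glsCoeff, Matrix.mul_assoc, Matrix.mul_assoc, ← Matrix.mul_assoc Xᵀ, nonsing_inv_mul _ hC]

theorem glsCoeff_transpose (hS : S.IsSymm) : (glsCoeff X S)ᵀ = S⁻¹ * X * (Xᵀ * S⁻¹ * X)⁻¹ := by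
  rw [glsCoeff, transpose_mul, transpose_mul, transpose_transpose, hS.inv.eq,
    (hS.inv.transpose_mul_mul X).inv.eq]
  simp only [Matrix.mul_assoc]

theorem mul_mul_glsCoeff_transpose (hS : S.IsSymm) (hSdet : IsUnit S.det) {A : Matrix n m K}
    (hA : A * X = 1) : A * S * (glsCoeff X S)ᵀ = (Xᵀ * S⁻¹ * X)⁻¹ := by
  rw [glsCoeff_transpose hS, ← Matrix.mul_assoc, ← Matrix.mul_assoc, Matrix.mul_assoc A,
    mul_nonsing_inv _ hSdet, Matrix.mul_one, hA, Matrix.one_mul]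

theorem sub_glsCoeff_mul_mul_transpose (hS : S.IsSymm) (hSdet : IsUnit S.det)
    (hC : IsUnit (Xᵀ * S⁻¹ * X).det) {A : Matrix n m K} (hA : A * X = 1) :
    (A - glsCoeff X S) * S * (A - glsCoeff X S)ᵀ = A * S * Aᵀ - (Xᵀ * S⁻¹ * X)⁻¹ := by
  have hAG := mul_mul_glsCoeff_transpose hS hSdet hA
  have hGA : glsCoeff X S * S * Aᵀ = (Xᵀ * S⁻¹ * X)⁻¹ := by
    rw [← (hS.inv.transpose_mul_mul X).inv.eq, ← hAG, transpose_mul, transpose_mul, hS.eq,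
      transpose_transpose, Matrix.mul_assoc]
  have hGG := mul_mul_glsCoeff_transpose hS hSdet (glsCoeff_mul hC)
  rw [transpose_sub, Matrix.sub_mul, Matrix.sub_mul, Matrix.mul_sub, Matrix.mul_sub, hAG, hGA, hGG]
  abel

end Matrix

theorem aitken_GLS_is_BLUE_general (n d : ℕ)
    (X : Matrix (Fin n) (Fin d) ℝ) (hX : X.rank = d)
    (S : Matrix (Fin n) (Fin n) ℝ) (hS : S.PosDef)
    (A : Matrix (Fin d) (Fin n) ℝ) (hA : A * X = 1) :
    (A * S * Aᵀ - (Xᵀ * S⁻¹ * X)⁻¹).PosSemidef := by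
  have hXinj : Function.Injective X.mulVec :=
    mulVec_injective_iff_rank_eq_card.mpr (hX.trans (Fintype.card_fin d).symm)
  have hC : (Xᵀ * S⁻¹ * X).PosDef := by
    simpa [conjTranspose_eq_transpose_of_trivial] using hS.inv.conjTranspose_mul_mul_same hXinj
  have hSymm : S.IsSymm := by simpa using hS.isHermitian
  rw [← sub_glsCoeff_mul_mul_transpose hSymm hS.det_pos.ne'.isUnit hC.det_pos.ne'.isUnit hA]
  simpa [conjTranspose_eq_transpose_of_trivial] using
    hS.posSemidef.mul_mul_conjTranspose_same (A - glsCoeff X S)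

/-- Aitken's theorem (GLS is BLUE), matrix form: for `X` of full column rank and `S`
symmetric positive definite, the covariance `A * S * Aᵀ` of any linear unbiased estimator
(`A * X = 1`) dominates the GLS covariance `(Xᵀ * S⁻¹ * X)⁻¹` in the Loewner order. -/
theorem aitken_GLS_is_BLUE (n d : ℕ) (hn : 0 < n) (hd : 0 < d)
    (X : Matrix (Fin n) (Fin d) ℝ) (hX : X.rank = d)
    (S : Matrix (Fin n) (Fin n) ℝ) (hS : S.PosDef)
    (A : Matrix (Fin d) (Fin n) ℝ) (hA : A * X = 1) :
    (A * S * Aᵀ - (Xᵀ * S⁻¹ * X)⁻¹).PosSemidef :=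
  aitken_GLS_is_BLUE_general n d X hX S hS A hA
end

section
/- Variance ratio bound for weighted least squares (Lemma 1, deterministic trace form): let X be a real n×d matrix of full column rank d, and let σ_j > 0 and w_j > 0 for j = 1, …, n. Set Ω = diag(σ_1², …, σ_n²), W = diag(w_1, …, w_n), and W* = Ω⁻¹ = diag(σ_1⁻², …, σ_n⁻²). Then tr((Xᵀ W X)⁻¹ Xᵀ W Ω W X (Xᵀ W X)⁻¹) ≤ (max_{1≤i≤n} w_i σ_i² / min_{1≤j≤n} w_j σ_j²) · tr((Xᵀ W* X)⁻¹); i.e., the trace of the covariance of the WLS estimator with weights W is at most max_i(w_i σ_i²)/min_j(w_j σ_j²) times the trace of the covariance of the optimally weighted estimator. -/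
/-!
Write `A = Xᵀ W X`, `B = Xᵀ W Ω W X` and `C = Xᵀ Ω⁻¹ X`, and let `M` and `m` be the largest and
smallest of the numbers `w_j σ_j²`. Since `W Ω W ≤ M W` entrywise on the diagonal, `B ≤ M A` in the
Loewner order, and conjugating by `A⁻¹` gives `A⁻¹ B A⁻¹ ≤ M A⁻¹`. Since `m Ω⁻¹ ≤ W`, `m C ≤ A`,
so `A⁻¹ ≤ m⁻¹ C⁻¹` because inversion is Loewner-antitone. Taking traces of both inequalities gives
the bound.
-/

open Matrix

namespace Matrix

variable {ι κ K : Type*}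

theorem mulVec_injective_of_rank_eq_card [Field K] [Fintype κ] (X : Matrix ι κ K)
    (hX : X.rank = Fintype.card κ) : Function.Injective X.mulVec := by
  have h := X.mulVecLin.finrank_range_add_finrank_ker
  rw [← rank, hX, Module.finrank_fintype_fun_eq_card, add_eq_left, Submodule.finrank_eq_zero,
    LinearMap.ker_eq_bot] at h
  exact h

variable [Fintype ι]

theorem PosSemidef.trace_le_trace_of_sub [Ring K] [PartialOrder K] [StarRing K]
    [IsOrderedAddMonoid K] {A B : Matrix ι ι K} (h : (A - B).PosSemidef) :
    B.trace ≤ A.trace := by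
  simpa [trace_sub] using h.trace_nonneg

variable [DecidableEq ι]

theorem posSemidef_conjTranspose_mul_diagonal_mul_sub [Ring K] [PartialOrder K] [StarRing K]
    [StarOrderedRing K] [Fintype κ] (X : Matrix ι κ K) {e f : ι → K} (hfe : f ≤ e) :
    (Xᴴ * diagonal e * X - Xᴴ * diagonal f * X).PosSemidef := by
  rw [← Matrix.sub_mul, ← Matrix.mul_sub, diagonal_sub]
  exact (PosSemidef.diagonal (sub_nonneg.2 hfe)).conjTranspose_mul_mul_same X

section Field

variable [Field K] [PartialOrder K] [StarRing K]

theorem PosDef.trace_inv_mul_mul_inv_le [IsOrderedAddMonoid K] {A B : Matrix ι ι K}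
    (hA : A.PosDef) {c : K} (h : (c • A - B).PosSemidef) :
    (A⁻¹ * B * A⁻¹).trace ≤ c * A⁻¹.trace := by
  have hconj := h.conjTranspose_mul_mul_same A⁻¹
  rw [hA.inv.isHermitian.eq, Matrix.mul_sub, Matrix.sub_mul, Matrix.mul_smul, Matrix.smul_mul,
    nonsing_inv_mul _ ((isUnit_iff_isUnit_det A).1 hA.isUnit), Matrix.one_mul] at hconj
  simpa [trace_smul] using hconj.trace_le_trace_of_sub

/-- Both `A - B` and `B⁻¹ - A⁻¹` are Schur complements in `fromBlocks A 1 1 B⁻¹`. -/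
theorem PosDef.posSemidef_inv_sub_inv [StarOrderedRing K] {A B : Matrix ι ι K} (hB : B.PosDef)
    (hAB : (A - B).PosSemidef) : (B⁻¹ - A⁻¹).PosSemidef := by
  have hA : A.PosDef := by simpa using hB.add_posSemidef hAB
  let _ := hA.isUnit.invertible
  let _ := hB.inv.isUnit.invertible
  have hblock := (PosDef.fromBlocks₂₂ A (1 : Matrix ι ι K) hB.inv).2
    (by simpa [nonsing_inv_nonsing_inv _ ((isUnit_iff_isUnit_det B).1 hB.isUnit)] using hAB)
  simpa using (PosDef.fromBlocks₁₁ 1 B⁻¹ hA).1 (by simpa using hblock)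

end Field

variable [Fintype κ] [DecidableEq κ] {X : Matrix ι κ ℝ}

theorem trace_inv_mul_mul_inv_le_of_mul_le (hX : Function.Injective X.mulVec) {w s : ι → ℝ}
    (hw : ∀ i, 0 < w i) {M : ℝ} (hM : ∀ i, w i * s i ≤ M) :
    ((Xᵀ * diagonal w * X)⁻¹ * (Xᵀ * diagonal w * diagonal s * diagonal w * X)
      * (Xᵀ * diagonal w * X)⁻¹).trace ≤ M * (Xᵀ * diagonal w * X)⁻¹.trace := by
  have hA := (PosDef.diagonal hw).conjTranspose_mul_mul_same hX
  rw [conjTranspose_eq_transpose_of_trivial] at hA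
  refine hA.trace_inv_mul_mul_inv_le ?_
  have hMA : M • (Xᵀ * diagonal w * X) = Xᵀ * diagonal (M • w) * X := by
    rw [diagonal_smul, Matrix.mul_smul, Matrix.smul_mul]
  have hB : Xᵀ * diagonal w * diagonal s * diagonal w * X
      = Xᵀ * diagonal (fun i => w i * s i * w i) * X := by
    simp only [diagonal_mul_diagonal, Matrix.mul_assoc]
  rw [hMA, hB, ← conjTranspose_eq_transpose_of_trivial]
  exact posSemidef_conjTranspose_mul_diagonal_mul_sub X
    (fun i => by simpa using mul_le_mul_of_nonneg_right (hM i) (hw i).le)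

theorem trace_inv_le_inv_mul_trace_inv_of_smul_le (hX : Function.Injective X.mulVec)
    {v w : ι → ℝ} (hv : ∀ i, 0 < v i) {c : ℝ} (hc : 0 < c) (hcv : c • v ≤ w) :
    (Xᵀ * diagonal w * X)⁻¹.trace ≤ c⁻¹ * (Xᵀ * diagonal v * X)⁻¹.trace := by
  have hC := (PosDef.diagonal hv).conjTranspose_mul_mul_same hX
  rw [conjTranspose_eq_transpose_of_trivial] at hC
  have hgram := posSemidef_conjTranspose_mul_diagonal_mul_sub X hcv
  rw [conjTranspose_eq_transpose_of_trivial, diagonal_smul, Matrix.mul_smul, Matrix.smul_mul]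
    at hgram
  have htr := ((hC.smul hc).posSemidef_inv_sub_inv hgram).trace_le_trace_of_sub
  let _ : Invertible c := invertibleOfNonzero hc.ne'
  rwa [inv_smul _ c ((isUnit_iff_isUnit_det _).1 hC.isUnit), invOf_eq_inv, trace_smul] at htr

end Matrix

theorem wls_variance_ratio_bound_general (n d : ℕ) (hn : 0 < n)
    (X : Matrix (Fin n) (Fin d) ℝ) (hX : X.rank = d)
    (σ : Fin n → ℝ) (hσ : ∀ j, 0 < σ j)
    (w : Fin n → ℝ) (hw : ∀ j, 0 < w j) :
    haveI : Nonempty (Fin n) := Fin.pos_iff_nonempty.mp hn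
    Matrix.trace ((Xᵀ * Matrix.diagonal w * X)⁻¹
        * (Xᵀ * Matrix.diagonal w * Matrix.diagonal (fun j => (σ j) ^ 2)
            * Matrix.diagonal w * X)
        * (Xᵀ * Matrix.diagonal w * X)⁻¹)
      ≤ (Finset.univ.sup' Finset.univ_nonempty (fun i => w i * (σ i) ^ 2)
          / Finset.univ.inf' Finset.univ_nonempty (fun j => w j * (σ j) ^ 2))
        * Matrix.trace ((Xᵀ * Matrix.diagonal (fun j => ((σ j) ^ 2)⁻¹) * X)⁻¹) := by
  have : Nonempty (Fin n) := Fin.pos_iff_nonempty.mp hn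
  set M := Finset.univ.sup' Finset.univ_nonempty (fun i => w i * σ i ^ 2)
  set m := Finset.univ.inf' Finset.univ_nonempty (fun j => w j * σ j ^ 2)
  have hle_M (i : Fin n) : w i * σ i ^ 2 ≤ M :=
    Finset.le_sup' (fun i => w i * σ i ^ 2) (Finset.mem_univ i)
  have hm_le (i : Fin n) : m ≤ w i * σ i ^ 2 :=
    Finset.inf'_le (fun i => w i * σ i ^ 2) (Finset.mem_univ i)
  have hm : 0 < m := (Finset.lt_inf'_iff _).2 fun i _ => by have := hσ i; have := hw i; positivity
  have hM : 0 ≤ M := hm.le.trans ((hm_le ⟨0, hn⟩).trans (hle_M ⟨0, hn⟩))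
  have hinj := X.mulVec_injective_of_rank_eq_card (by simpa using hX)
  calc _ ≤ M * (Xᵀ * diagonal w * X)⁻¹.trace := trace_inv_mul_mul_inv_le_of_mul_le hinj hw hle_M
    _ ≤ M * (m⁻¹ * (Xᵀ * diagonal (fun j => (σ j ^ 2)⁻¹) * X)⁻¹.trace) := by
      gcongr
      refine trace_inv_le_inv_mul_trace_inv_of_smul_le hinj (fun j => by have := hσ j; positivity)
        hm fun j => ?_
      simpa [← div_eq_mul_inv, div_le_iff₀ (pow_pos (hσ j) 2)] using hm_le j
    _ = _ := by ring

/-- Variance ratio bound for weighted least squares (Lemma 1, deterministic trace form):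
the trace of the covariance of the WLS estimator with weights `w` is at most
`max_i (w_i σ_i²) / min_j (w_j σ_j²)` times the trace of the optimally weighted covariance. -/
theorem wls_variance_ratio_bound (n d : ℕ) (hn : 0 < n) (hd : 0 < d)
    (X : Matrix (Fin n) (Fin d) ℝ) (hX : X.rank = d)
    (σ : Fin n → ℝ) (hσ : ∀ j, 0 < σ j)
    (w : Fin n → ℝ) (hw : ∀ j, 0 < w j) :
    haveI : Nonempty (Fin n) := Fin.pos_iff_nonempty.mp hn
    Matrix.trace ((Xᵀ * Matrix.diagonal w * X)⁻¹
        * (Xᵀ * Matrix.diagonal w * Matrix.diagonal (fun j => (σ j) ^ 2)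
            * Matrix.diagonal w * X)
        * (Xᵀ * Matrix.diagonal w * X)⁻¹)
      ≤ (Finset.univ.sup' Finset.univ_nonempty (fun i => w i * (σ i) ^ 2)
          / Finset.univ.inf' Finset.univ_nonempty (fun j => w j * (σ j) ^ 2))
        * Matrix.trace ((Xᵀ * Matrix.diagonal (fun j => ((σ j) ^ 2)⁻¹) * X)⁻¹) :=
  wls_variance_ratio_bound_general n d hn X hX σ hσ w hw
end
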